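/- If r_n → 0 and n·r_n^m → 0 as n → ∞, then lim_{n→∞} n^{-1} E[β_{0,n}] = 1, where β_{0,n} denotes the number of connected components of the union of balls U(𝒳_n, r_n). -/

import Mathlib

open MeasureTheory Filter
open scoped ENNReal NNReal Topology

noncomputable section

/-- `M` is an `m`-dimensional `C^∞` submanifold of `ℝ^d` (without boundary): every point of `M`
has an open neighborhood `U ⊆ ℝ^d` such that `M ∩ U` is the image of a `C^∞` embedding of an
open subset of `ℝ^m`. -/
def IsSmoothSubmanifold {d : ℕ} (m : ℕ) (M : Set (EuclideanSpace ℝ (Fin d))) : Prop :=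
  ∀ x ∈ M, ∃ (U : Set (EuclideanSpace ℝ (Fin d))) (V : Set (EuclideanSpace ℝ (Fin m)))
    (φ : EuclideanSpace ℝ (Fin m) → EuclideanSpace ℝ (Fin d)),
      IsOpen U ∧ x ∈ U ∧ IsOpen V ∧ ContDiffOn ℝ (⊤ : ℕ∞) φ V ∧
      M ∩ U = φ '' V ∧
      (∀ v ∈ V, Function.Injective (fderivWithin ℝ φ V v)) ∧
      Topology.IsEmbedding (V.restrict φ)

/-- The sampling distribution on `ℝ^d`: density `f` with respect to the `m`-dimensional
Hausdorff measure restricted to `M`; `F(A) = ∫_{A ∩ M} f dH^m`. -/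
def sampleMeasure {d : ℕ} (m : ℕ) (M : Set (EuclideanSpace ℝ (Fin d)))
    (f : EuclideanSpace ℝ (Fin d) → ℝ) : Measure (EuclideanSpace ℝ (Fin d)) :=
  ((Measure.hausdorffMeasure (m : ℝ)).restrict M).withDensity fun x => ENNReal.ofReal (f x)

/-- The (k+1)-element set `Y` generates an index-`k` critical point of the distance function
from `P`, with critical value `< r`:  `Y` is affinely independent, its circumcenter `c`
(the unique point of the affine span of `Y` equidistant, at distance `R`, from all points
of `Y`) lies in the relative interior of the convex hull of `Y`, the circumradius satisfies
`R < r`, and no point of `P` lies in the open ball `B(c, R)`. -/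
def IsCritFor {d : ℕ} (Y P : Finset (EuclideanSpace ℝ (Fin d))) (r : ℝ) : Prop :=
  AffineIndependent ℝ (fun p : {x // x ∈ Y} => p.1) ∧
  ∃ (c : EuclideanSpace ℝ (Fin d)) (R : ℝ),
    c ∈ affineSpan ℝ (Y : Set (EuclideanSpace ℝ (Fin d))) ∧
    (∀ y ∈ Y, dist c y = R) ∧
    c ∈ intrinsicInterior ℝ (convexHull ℝ (Y : Set (EuclideanSpace ℝ (Fin d)))) ∧
    R < r ∧ ∀ p ∈ P, R ≤ dist c p

open Classical in
/-- The set of the first `n` sample points `𝒳_n = {X_1, …, X_n}`. -/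
def samplePts {d : ℕ} {Ω : Type*} (X : ℕ → Ω → EuclideanSpace ℝ (Fin d)) (n : ℕ) (ω : Ω) :
    Finset (EuclideanSpace ℝ (Fin d)) :=
  (Finset.range n).image fun i => X i ω

open Classical in
/-- `N_{k,n}(r)`: the number of `(k+1)`-element subsets of `𝒳_n` generating an index-`k`
critical point of the distance function from `𝒳_n`, with critical value `< r`. -/
def Nkn {d : ℕ} {Ω : Type*} (X : ℕ → Ω → EuclideanSpace ℝ (Fin d)) (k n : ℕ) (r : ℝ)
    (ω : Ω) : ℕ :=
  (((samplePts X n ω).powersetCard (k + 1)).filter fun Y =>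
    IsCritFor Y (samplePts X n ω) r).card

/-- The family of `k+1` points `0, y 0, …, y (k-1)` in `ℝ^m`. -/
def ptsWithZero {m k : ℕ} (y : Fin k → EuclideanSpace ℝ (Fin m)) :
    Fin (k + 1) → EuclideanSpace ℝ (Fin m) :=
  Fin.cons 0 y

open Classical in
/-- `R(0,y)`: the circumradius of the `k+1` points `0, y_1, …, y_k ∈ ℝ^m`
(defined as `0` when the points are affinely dependent). -/
def circumR {m k : ℕ} (y : Fin k → EuclideanSpace ℝ (Fin m)) : ℝ :=
  if h : AffineIndependent ℝ (ptsWithZero y) then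
    (⟨ptsWithZero y, h⟩ : Affine.Simplex ℝ (EuclideanSpace ℝ (Fin m)) k).circumradius
  else 0

open Classical in
/-- `C(0,y)`: the circumcenter of the `k+1` points `0, y_1, …, y_k ∈ ℝ^m`. -/
def circumC {m k : ℕ} (y : Fin k → EuclideanSpace ℝ (Fin m)) : EuclideanSpace ℝ (Fin m) :=
  if h : AffineIndependent ℝ (ptsWithZero y) then
    (⟨ptsWithZero y, h⟩ : Affine.Simplex ℝ (EuclideanSpace ℝ (Fin m)) k).circumcenter
  else 0

/-- `h^c(0,y) = 1`: the points `0, y_1, …, y_k` are affinely independent and their circumcenter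
lies in the relative interior of their convex hull. -/
def hcProp {m k : ℕ} (y : Fin k → EuclideanSpace ℝ (Fin m)) : Prop :=
  AffineIndependent ℝ (ptsWithZero y) ∧
    circumC y ∈ intrinsicInterior ℝ (convexHull ℝ (Set.range (ptsWithZero y)))

open Classical in
/-- `h^c(0,y)` as a real-valued indicator. -/
def hcInd {m k : ℕ} (y : Fin k → EuclideanSpace ℝ (Fin m)) : ℝ :=
  if hcProp y then 1 else 0

open Classical in
/-- `h_1^c(0,y) = h^c(0,y) · 1{R(0,y) ≤ 1}` as a real-valued indicator. -/
def h1cInd {m k : ℕ} (y : Fin k → EuclideanSpace ℝ (Fin m)) : ℝ :=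
  if hcProp y ∧ circumR y ≤ 1 then 1 else 0

/-- `μ_k^c = (1/(k+1)!) (∫_M f^{k+1} dH^m) ∫_{(ℝ^m)^k} h_1^c(0,y) dy`. -/
def muKC {d : ℕ} (m k : ℕ) (M : Set (EuclideanSpace ℝ (Fin d)))
    (f : EuclideanSpace ℝ (Fin d) → ℝ) : ℝ :=
  (1 / (Nat.factorial (k + 1) : ℝ)) *
    (∫ x in M, f x ^ (k + 1) ∂(Measure.hausdorffMeasure (m : ℝ))) *
    ∫ y : Fin k → EuclideanSpace ℝ (Fin m), h1cInd y

/-- `ω_m`: the Lebesgue volume of the unit ball in `ℝ^m`. -/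
def unitBallVol (m : ℕ) : ℝ :=
  (volume (Metric.ball (0 : EuclideanSpace ℝ (Fin m)) 1)).toReal

/-- `U(𝒳_n, r)`: the union of closed balls of radius `r` around the first `n` sample points. -/
def unionBalls {d : ℕ} {Ω : Type*} (X : ℕ → Ω → EuclideanSpace ℝ (Fin d)) (n : ℕ) (r : ℝ)
    (ω : Ω) : Set (EuclideanSpace ℝ (Fin d)) :=
  ⋃ i ∈ Finset.range n, Metric.closedBall (X i ω) r

/-- The number of connected components of `S ⊆ ℝ^d`. -/
def numComponents {d : ℕ} (S : Set (EuclideanSpace ℝ (Fin d))) : ℕ :=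
  Nat.card (ConnectedComponents ↥S)

/-- `γ_k(λ)`. -/
def gammaK {d : ℕ} (m k : ℕ) (M : Set (EuclideanSpace ℝ (Fin d)))
    (f : EuclideanSpace ℝ (Fin d) → ℝ) (lam : ℝ) : ℝ :=
  (lam ^ k / (Nat.factorial (k + 1) : ℝ)) *
    ∫ x in M, (∫ y : Fin k → EuclideanSpace ℝ (Fin m),
        f x ^ (k + 1) * h1cInd y * Real.exp (-(lam * unitBallVol m * circumR y ^ m * f x)))
      ∂(Measure.hausdorffMeasure (m : ℝ))

/-- `γ_k(∞)`. -/
def gammaKInf (m k : ℕ) : ℝ :=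
  (1 / (Nat.factorial (k + 1) : ℝ)) *
    ∫ y : Fin k → EuclideanSpace ℝ (Fin m),
      hcInd y * Real.exp (-(unitBallVol m * circumR y ^ m))

section AuxSubcrit
open Metric Set

namespace Subcrit


def ncomp (n : ℕ) (A : Fin n → Fin n → Bool) : ℕ :=
  Nat.card (Quotient (Relation.EqvGen.setoid (fun i j : Fin n => A i j = true)))

lemma eqvGen_closed {α : Type*} {R : α → α → Prop} (hsym : ∀ a b, R a b → R b a) (T : Set α)
    (hT : ∀ a ∈ T, ∀ b, R a b → b ∈ T) {a b : α} (h : Relation.EqvGen R a b) :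
    (a ∈ T → b ∈ T) ∧ (b ∈ T → a ∈ T) := by
  induction h with
  | rel a b h => exact ⟨fun ha => hT a ha b h, fun hb => hT b hb a (hsym a b h)⟩
  | refl a => exact ⟨id, id⟩
  | symm a b _ ih => exact ⟨ih.2, ih.1⟩
  | trans a b c _ _ ih1 ih2 => exact ⟨fun h => ih2.1 (ih1.1 h), fun h => ih1.2 (ih2.2 h)⟩

theorem numComponents_eq_ncomp {d n : ℕ} (x : Fin n → EuclideanSpace ℝ (Fin d)) {r : ℝ}
    (hr : 0 < r) (A : Fin n → Fin n → Bool)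
    (hA : ∀ i j, A i j = true ↔ dist (x i) (x j) ≤ 2 * r) :
    numComponents (⋃ i, Metric.closedBall (x i) r) = ncomp n A := by
  classical
  set U : Set (EuclideanSpace ℝ (Fin d)) := ⋃ i, Metric.closedBall (x i) r with hU
  have hmem : ∀ i, x i ∈ U := fun i => Set.mem_iUnion.2 ⟨i, Metric.mem_closedBall_self hr.le⟩
  set q : Fin n → ConnectedComponents ↥U :=
    fun i => ConnectedComponents.mk ⟨x i, hmem i⟩ with hq
  have key : ∀ (s : Set (EuclideanSpace ℝ (Fin d))), s ⊆ U → IsPreconnected s →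
      ∀ (a b : ↥U), (a : EuclideanSpace ℝ (Fin d)) ∈ s → (b : EuclideanSpace ℝ (Fin d)) ∈ s →
        ConnectedComponents.mk a = ConnectedComponents.mk b := by
    intro s hsU hs a b ha hb
    have hpre : IsPreconnected ((Subtype.val : ↥U → EuclideanSpace ℝ (Fin d)) ⁻¹' s) := by
      rw [← Topology.IsInducing.subtypeVal.isPreconnected_image]
      have himg : (Subtype.val : ↥U → EuclideanSpace ℝ (Fin d)) '' (Subtype.val ⁻¹' s) = s := by
        rw [Subtype.image_preimage_coe]
        exact inter_eq_self_of_subset_right hsU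
      rwa [himg]
    rw [ConnectedComponents.coe_eq_coe']
    exact hpre.subset_connectedComponent hb ha
  have hPC : ∀ i, IsPreconnected (Metric.closedBall (x i) r) :=
    fun i => (convex_closedBall _ _).isPreconnected
  have hqsurj : Function.Surjective q := by
    intro z
    obtain ⟨w, rfl⟩ := ConnectedComponents.surjective_coe z
    obtain ⟨i, hi⟩ := Set.mem_iUnion.1 w.2
    exact ⟨i, key _ (Set.subset_iUnion _ i) (hPC i) _ _ (Metric.mem_closedBall_self hr.le) hi⟩
  have hadj : ∀ i j, A i j = true → q i = q j := by
    intro i j hAij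
    have hd : dist (x i) (x j) ≤ 2 * r := (hA i j).1 hAij
    have hz1 : midpoint ℝ (x i) (x j) ∈ Metric.closedBall (x i) r := by
      rw [Metric.mem_closedBall, dist_midpoint_left, Real.norm_ofNat]
      rw [inv_mul_le_iff₀ (by norm_num : (0:ℝ) < 2)]; linarith
    have hz2 : midpoint ℝ (x i) (x j) ∈ Metric.closedBall (x j) r := by
      rw [Metric.mem_closedBall, dist_midpoint_right, Real.norm_ofNat]
      rw [inv_mul_le_iff₀ (by norm_num : (0:ℝ) < 2)]; linarith
    have hconn : IsPreconnected (Metric.closedBall (x i) r ∪ Metric.closedBall (x j) r) :=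
      IsPreconnected.union _ hz1 hz2 (hPC i) (hPC j)
    exact key _ (Set.union_subset (Set.subset_iUnion _ i) (Set.subset_iUnion _ j)) hconn _ _
      (Or.inl (Metric.mem_closedBall_self hr.le)) (Or.inr (Metric.mem_closedBall_self hr.le))
  have hreach : ∀ i j, Relation.EqvGen (fun i j => A i j = true) i j → q i = q j := by
    intro i j h
    induction h with
    | rel a b h => exact hadj a b h
    | refl a => rfl
    | symm a b _ ih => exact ih.symm
    | trans a b c _ _ ih1 ih2 => exact ih1.trans ih2
  have hsep : ∀ i j, q i = q j → Relation.EqvGen (fun i j => A i j = true) i j := by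
    intro i j hqij
    set S : Set (Fin n) := {k | Relation.EqvGen (fun i j => A i j = true) i k} with hS
    set US : Set (EuclideanSpace ℝ (Fin d)) := ⋃ k ∈ S, Metric.closedBall (x k) r with hUS
    set UT : Set (EuclideanSpace ℝ (Fin d)) := ⋃ k ∈ Sᶜ, Metric.closedBall (x k) r with hUT
    have hdisj : ∀ z, z ∈ US → z ∈ UT → False := by
      intro z hzS hzT
      obtain ⟨k, hkS, hk⟩ := Set.mem_iUnion₂.1 hzS
      obtain ⟨l, hlS, hl⟩ := Set.mem_iUnion₂.1 hzT
      apply hlS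
      have hkl : dist (x k) (x l) ≤ 2 * r := by
        calc dist (x k) (x l) ≤ dist (x k) z + dist z (x l) := dist_triangle _ _ _
        _ ≤ r + r := by
            refine add_le_add ?_ ?_
            · rw [dist_comm]; exact hk
            · exact hl
        _ = 2 * r := by ring
      exact Relation.EqvGen.trans _ _ _ hkS (Relation.EqvGen.rel _ _ ((hA k l).2 hkl))
    have hUScl : IsClosed US :=
      Set.Finite.isClosed_biUnion (Set.toFinite S) fun k _ => Metric.isClosed_closedBall
    have hUTcl : IsClosed UT :=
      Set.Finite.isClosed_biUnion (Set.toFinite Sᶜ) fun k _ => Metric.isClosed_closedBall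
    have hUcover : ∀ z : ↥U, (z : EuclideanSpace ℝ (Fin d)) ∈ US ∪ UT := by
      intro z
      obtain ⟨k, hk⟩ := Set.mem_iUnion.1 z.2
      by_cases hkS : k ∈ S
      · exact Or.inl (Set.mem_biUnion hkS hk)
      · exact Or.inr (Set.mem_biUnion hkS hk)
    set C : Set ↥U := Subtype.val ⁻¹' US with hC
    have hCclosed : IsClosed C := hUScl.preimage continuous_subtype_val
    have hCopen : IsOpen C := by
      rw [← isClosed_compl_iff]
      have hCc : Cᶜ = Subtype.val ⁻¹' UT := by
        ext z
        simp only [hC, Set.mem_compl_iff, Set.mem_preimage]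
        constructor
        · intro hz
          rcases hUcover z with h | h
          · exact absurd h hz
          · exact h
        · intro hz hz'
          exact hdisj _ hz' hz
      rw [hCc]
      exact hUTcl.preimage continuous_subtype_val
    have hiC : (⟨x i, hmem i⟩ : ↥U) ∈ C :=
      Set.mem_preimage.2 (Set.mem_biUnion (Relation.EqvGen.refl i) (Metric.mem_closedBall_self hr.le))
    have hcomp := IsClopen.connectedComponent_subset ⟨hCclosed, hCopen⟩ hiC
    have hj : (⟨x j, hmem j⟩ : ↥U) ∈ connectedComponent (⟨x i, hmem i⟩ : ↥U) :=
      ConnectedComponents.coe_eq_coe'.1 hqij.symm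
    obtain ⟨k, hkS, hk⟩ := Set.mem_iUnion₂.1 (hcomp hj)
    refine Relation.EqvGen.trans _ _ _ hkS (Relation.EqvGen.rel _ _ ((hA k j).2 ?_))
    rw [dist_comm]
    calc dist (x j) (x k) ≤ r := hk
    _ ≤ 2 * r := by linarith
  refine (Nat.card_eq_of_bijective
    (Quotient.lift q (fun a b h => hreach a b h) :
      Quotient (Relation.EqvGen.setoid (fun i j : Fin n => A i j = true)) → ConnectedComponents ↥U)
    ⟨?_, ?_⟩).symm
  · rintro ⟨a⟩ ⟨b⟩ h
    exact Quot.sound (hsep a b h)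
  · intro z
    obtain ⟨i, hi⟩ := hqsurj z
    exact ⟨Quotient.mk _ i, hi⟩

lemma ncomp_le (n : ℕ) (A : Fin n → Fin n → Bool) : ncomp n A ≤ n := by
  have h := Nat.card_le_card_of_surjective
    (Quotient.mk (Relation.EqvGen.setoid (fun i j : Fin n => A i j = true)))
    Quotient.mk_surjective
  simpa [ncomp] using h

lemma le_ncomp_add (n : ℕ) (A : Fin n → Fin n → Bool) (hsymm : ∀ i j, A i j = A j i) :
    n ≤ ncomp n A + ∑ i : Fin n, ∑ j : Fin n, (if j ≠ i ∧ A i j = true then 1 else 0) := by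
  classical
  set Iso : Finset (Fin n) := Finset.univ.filter (fun i => ∀ j, j ≠ i → A i j = false) with hIso
  have h1 : Iso.card ≤ ncomp n A := by
    have hinj : Function.Injective (fun i : {i : Fin n // i ∈ Iso} =>
        (Quotient.mk (Relation.EqvGen.setoid (fun i j : Fin n => A i j = true)) i.1)) := by
      rintro ⟨a, ha⟩ ⟨b, hb⟩ hab
      have hgen : Relation.EqvGen (fun i j : Fin n => A i j = true) a b := Quotient.exact hab
      have haIso : ∀ j, j ≠ a → A a j = false := by
        simpa [hIso] using ha
      have : b ∈ ({c : Fin n | c = a} : Set (Fin n)) := by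
        refine (eqvGen_closed ?_ _ ?_ hgen).1 rfl
        · intro c e h
          rw [hsymm]; exact h
        · rintro c rfl e he
          by_contra hne
          rw [haIso e (Ne.symm ?_)] at he
          · exact Bool.false_ne_true he
          · intro h; exact hne h.symm
      exact Subtype.ext (show b = a by simpa using this).symm
    have := Nat.card_le_card_of_injective _ hinj
    rw [Nat.card_eq_fintype_card (α := {i : Fin n // i ∈ Iso}), Fintype.card_coe] at this
    exact this
  have h2 : (Finset.univ \ Iso).card ≤
      ∑ i : Fin n, ∑ j : Fin n, (if j ≠ i ∧ A i j = true then 1 else 0) := by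
    have hle : ∀ i ∈ Finset.univ \ Iso,
        1 ≤ ∑ j : Fin n, (if j ≠ i ∧ A i j = true then 1 else 0) := by
      intro i hi
      rw [hIso, Finset.mem_sdiff, Finset.mem_filter] at hi
      have hni := fun h => hi.2 ⟨Finset.mem_univ i, h⟩
      obtain ⟨j, hj⟩ := not_forall.1 hni
      obtain ⟨hji, hAij⟩ := Classical.not_imp.1 hj
      have hAtrue : A i j = true := by
        cases h : A i j
        · exact absurd h hAij
        · rfl
      calc (1 : ℕ) = if j ≠ i ∧ A i j = true then 1 else 0 := by simp [hji, hAtrue]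
      _ ≤ ∑ j : Fin n, (if j ≠ i ∧ A i j = true then 1 else 0) :=
          Finset.single_le_sum (f := fun j => if j ≠ i ∧ A i j = true then (1:ℕ) else 0) (fun _ _ => Nat.zero_le _) (Finset.mem_univ j)
    calc (Finset.univ \ Iso).card = ∑ _i ∈ Finset.univ \ Iso, 1 := by simp
    _ ≤ ∑ i ∈ Finset.univ \ Iso, ∑ j : Fin n, (if j ≠ i ∧ A i j = true then 1 else 0) :=
        Finset.sum_le_sum hle
    _ ≤ ∑ i : Fin n, ∑ j : Fin n, (if j ≠ i ∧ A i j = true then 1 else 0) :=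
        Finset.sum_le_sum_of_subset (Finset.sdiff_subset)
  have huniv : Iso.card ≤ n := by
    have := Finset.card_le_card (Finset.subset_univ Iso)
    simpa [Finset.card_univ] using this
  calc n = Iso.card + (Finset.univ \ Iso).card := by
        rw [Finset.card_sdiff_of_subset (Finset.subset_univ _), Finset.card_univ, Fintype.card_fin]
        omega
  _ ≤ ncomp n A + ∑ i : Fin n, ∑ j : Fin n, (if j ≠ i ∧ A i j = true then 1 else 0) :=
      Nat.add_le_add h1 h2



lemma hm_closedBall_le (m : ℕ) (a : EuclideanSpace ℝ (Fin m)) {t : ℝ} (ht : 0 ≤ t) :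
    μH[(m:ℝ)] (Metric.closedBall a t) ≤
      ENNReal.ofReal ((Real.sqrt m) ^ m * (2 * t) ^ m) := by
  set e := WithLp.equiv 2 (Fin m → ℝ) with he
  have hlip : LipschitzWith ((Fintype.card (Fin m) : ℝ≥0) ^ ((1:ℝ≥0∞) / 2).toReal) e.symm :=
    (PiLp.antilipschitzWith_ofLp 2 (fun _ : Fin m => ℝ)).to_rightInverse e.right_inv
  have hsub : Metric.closedBall a t ⊆ e.symm '' Metric.closedBall (e a) t := by
    intro z hz
    refine ⟨e z, ?_, e.left_inv z⟩
    have := (PiLp.lipschitzWith_ofLp 2 (fun _ : Fin m => ℝ)).dist_le_mul z a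
    rw [NNReal.coe_one, one_mul] at this
    exact Metric.mem_closedBall.2 (this.trans hz)
  calc μH[(m:ℝ)] (Metric.closedBall a t)
      ≤ μH[(m:ℝ)] (e.symm '' Metric.closedBall (e a) t) := measure_mono hsub
    _ ≤ ((Fintype.card (Fin m) : ℝ≥0) ^ ((1:ℝ≥0∞) / 2).toReal : ℝ≥0) ^ (m:ℝ) *
        μH[(m:ℝ)] (Metric.closedBall (e a) t) :=
        hlip.hausdorffMeasure_image_le (by positivity) _
    _ ≤ ENNReal.ofReal ((Real.sqrt m) ^ m * (2 * t) ^ m) := by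
        have hpi : (μH[(m:ℝ)] : Measure (Fin m → ℝ)) = volume := by
          have := MeasureTheory.hausdorffMeasure_pi_real (ι := Fin m)
          simpa [Fintype.card_fin] using this
        rw [hpi]
        have hvol : volume (Metric.closedBall (e a) t) = ENNReal.ofReal ((2*t) ^ m) := by
          rw [closedBall_pi _ ht, volume_pi_pi]
          simp only [Real.volume_closedBall, Finset.prod_const, Finset.card_univ,
            Fintype.card_fin]
          rw [ENNReal.ofReal_pow (by linarith : (0:ℝ) ≤ 2*t)]
        rw [hvol]
        have hK : (((Fintype.card (Fin m) : ℝ≥0) ^ ((1:ℝ≥0∞) / 2).toReal : ℝ≥0) : ℝ≥0∞) ^ (m:ℝ)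
            = ENNReal.ofReal ((Real.sqrt m) ^ m) := by
          have hhalf : ((1:ℝ≥0∞) / 2).toReal = (1/2 : ℝ) := by norm_num
          rw [hhalf, Fintype.card_fin]
          rw [← ENNReal.coe_rpow_of_nonneg _ (by positivity : (0:ℝ) ≤ (m:ℝ))]
          rw [NNReal.rpow_natCast]
          have hcoe : (Real.sqrt m) ^ m = ((((m : ℝ≥0) ^ (1/2 : ℝ)) ^ m : ℝ≥0) : ℝ) := by
            push_cast [NNReal.coe_rpow]
            rw [Real.sqrt_eq_rpow]
          rw [hcoe, ENNReal.ofReal_coe_nnreal]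
        rw [hK, ← ENNReal.ofReal_mul (by positivity)]



lemma local_patch {d m : ℕ} {M : Set (EuclideanSpace ℝ (Fin d))}
    (hMsub : IsSmoothSubmanifold m M) {p : EuclideanSpace ℝ (Fin d)} (hp : p ∈ M) :
    ∃ (ρ : ℝ) (W : Set (EuclideanSpace ℝ (Fin m)))
      (φ : EuclideanSpace ℝ (Fin m) → EuclideanSpace ℝ (Fin d)) (K L : ℝ≥0),
      0 < ρ ∧ M ∩ Metric.ball p ρ ⊆ φ '' W ∧
      (∀ a ∈ W, ∀ b ∈ W, dist (φ a) (φ b) ≤ L * dist a b) ∧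
      (∀ a ∈ W, ∀ b ∈ W, dist a b ≤ K * dist (φ a) (φ b)) := by
  obtain ⟨U, V, φ, hU, hpU, hV, hφ, hMU, hinj, hemb⟩ := hMsub p hp
  have hpMU : p ∈ φ '' V := hMU ▸ ⟨hp, hpU⟩
  obtain ⟨v₀, hv₀, hφv₀⟩ := hpMU
  have hVnhds : V ∈ 𝓝 v₀ := hV.mem_nhds hv₀
  set T := fderiv ℝ φ v₀ with hT
  have hstrict : HasStrictFDerivAt φ T v₀ :=
    (hφ.contDiffAt hVnhds).hasStrictFDerivAt (by simp)
  have hTinj : Function.Injective T := by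
    have := hinj v₀ hv₀
    rwa [fderivWithin_of_isOpen hV hv₀] at this
  obtain ⟨K₀, hK₀pos, hK₀⟩ := LinearMap.exists_antilipschitzWith (T : EuclideanSpace ℝ (Fin m) →ₗ[ℝ] EuclideanSpace ℝ (Fin d))
    (LinearMap.ker_eq_bot.2 hTinj)
  set c : ℝ≥0 := K₀⁻¹ / 2 with hc
  have hcpos : 0 < c := by
    rw [hc]
    exact half_pos (inv_pos.2 hK₀pos)
  obtain ⟨s₀, hs₀, happrox⟩ := hstrict.approximates_deriv_on_nhds (Or.inr hcpos)
  set W : Set (EuclideanSpace ℝ (Fin m)) := interior (s₀ ∩ V) with hW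
  have hWopen : IsOpen W := isOpen_interior
  have hWv₀ : v₀ ∈ W := by
    rw [hW, mem_interior_iff_mem_nhds]
    exact Filter.inter_mem hs₀ hVnhds
  have hWs₀ : W ⊆ s₀ := interior_subset.trans (Set.inter_subset_left)
  have hWV : W ⊆ V := interior_subset.trans (Set.inter_subset_right)
  -- find ρ using the embedding
  have hopen : ∃ O : Set (EuclideanSpace ℝ (Fin d)), IsOpen O ∧
      (V.restrict φ) ⁻¹' O = Subtype.val ⁻¹' W := by
    have : IsOpen ((Subtype.val : ↥V → EuclideanSpace ℝ (Fin m)) ⁻¹' W) :=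
      hWopen.preimage continuous_subtype_val
    obtain ⟨O, hO, hOW⟩ := hemb.toIsInducing.isOpen_iff.1 this
    exact ⟨O, hO, hOW⟩
  obtain ⟨O, hOopen, hOW⟩ := hopen
  have hpO : p ∈ O := by
    have hv₀W : (⟨v₀, hv₀⟩ : ↥V) ∈ Subtype.val ⁻¹' W := hWv₀
    rw [← hOW] at hv₀W
    simpa [Set.restrict, hφv₀] using hv₀W
  obtain ⟨ρ, hρpos, hρ⟩ := Metric.mem_nhds_iff.1 ((hU.inter hOopen).mem_nhds ⟨hpU, hpO⟩)
  refine ⟨ρ, W, φ, 2 * K₀, ‖T‖₊ + c, hρpos, ?_, ?_, ?_⟩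
  · -- M ∩ ball p ρ ⊆ φ '' W
    intro z hz
    have hzUO : z ∈ U ∩ O := hρ hz.2
    have hzMU : z ∈ φ '' V := hMU ▸ ⟨hz.1, hzUO.1⟩
    obtain ⟨v, hv, hφv⟩ := hzMU
    have : (⟨v, hv⟩ : ↥V) ∈ (V.restrict φ) ⁻¹' O := by
      simpa [Set.restrict, hφv] using hzUO.2
    rw [hOW] at this
    exact ⟨v, this, hφv⟩
  · -- Lipschitz
    intro a ha b hb
    have h1 := happrox a (hWs₀ ha) b (hWs₀ hb)
    have h2 : ‖T (a - b)‖ ≤ ‖T‖ * ‖a - b‖ := T.le_opNorm _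
    have h3 : ‖φ a - φ b‖ ≤ ‖T (a - b)‖ + c * ‖a - b‖ := by
      calc ‖φ a - φ b‖ = ‖T (a - b) + (φ a - φ b - T (a - b))‖ := by congr 1; abel
      _ ≤ ‖T (a - b)‖ + ‖φ a - φ b - T (a - b)‖ := norm_add_le _ _
      _ ≤ ‖T (a - b)‖ + c * ‖a - b‖ := by linarith
    rw [dist_eq_norm, dist_eq_norm]
    push_cast
    calc ‖φ a - φ b‖ ≤ ‖T (a - b)‖ + c * ‖a - b‖ := h3
    _ ≤ ‖T‖ * ‖a - b‖ + c * ‖a - b‖ := by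
        have := norm_nonneg (a - b); nlinarith [h2]
    _ = (‖T‖ + (c:ℝ)) * ‖a - b‖ := by ring
  · -- antilipschitz
    intro a ha b hb
    have h1 := happrox a (hWs₀ ha) b (hWs₀ hb)
    have h2 : ‖a - b‖ ≤ K₀ * ‖T (a - b)‖ := by
      have := hK₀.le_mul_dist a b
      rw [dist_eq_norm, dist_eq_norm] at this
      have heq : T (a - b) = T a - T b := map_sub T a b
      rw [heq]
      exact this
    have h3 : ‖T (a - b)‖ ≤ ‖φ a - φ b‖ + c * ‖a - b‖ := by
      calc ‖T (a - b)‖ = ‖(φ a - φ b) - (φ a - φ b - T (a - b))‖ := by congr 1; abel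
      _ ≤ ‖φ a - φ b‖ + ‖φ a - φ b - T (a - b)‖ := norm_sub_le _ _
      _ ≤ ‖φ a - φ b‖ + c * ‖a - b‖ := by linarith
    have hKc : (K₀ : ℝ) * c = 1 / 2 := by
      rw [hc]
      push_cast
      field_simp
    rw [dist_eq_norm, dist_eq_norm]
    push_cast
    have hK₀' : (0:ℝ) < K₀ := hK₀pos
    nlinarith [norm_nonneg (a - b), norm_nonneg (φ a - φ b), h2, h3]




lemma ahlfors {d m : ℕ} {M : Set (EuclideanSpace ℝ (Fin d))} (hM : IsCompact M)
    (hMsub : IsSmoothSubmanifold m M) :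
    ∃ C : ℝ, 0 ≤ C ∧ ∀ (x : EuclideanSpace ℝ (Fin d)) (s : ℝ), 0 < s →
      μH[(m:ℝ)] (M ∩ Metric.closedBall x s) ≤ ENNReal.ofReal (C * s ^ m) := by
  classical
  have hpatch : ∀ p : EuclideanSpace ℝ (Fin d), ∃ (ρ : ℝ)
      (W : Set (EuclideanSpace ℝ (Fin m)))
      (φ : EuclideanSpace ℝ (Fin m) → EuclideanSpace ℝ (Fin d)) (K L : ℝ≥0),
      0 < ρ ∧ (p ∈ M →
        (M ∩ Metric.ball p ρ ⊆ φ '' W ∧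
        (∀ a ∈ W, ∀ b ∈ W, dist (φ a) (φ b) ≤ L * dist a b) ∧
        (∀ a ∈ W, ∀ b ∈ W, dist a b ≤ K * dist (φ a) (φ b)))) := by
    intro p
    by_cases hp : p ∈ M
    · obtain ⟨ρ, W, φ, K, L, h1, h2, h3, h4⟩ := local_patch hMsub hp
      exact ⟨ρ, W, φ, K, L, h1, fun _ => ⟨h2, h3, h4⟩⟩
    · exact ⟨1, ∅, fun _ => 0, 1, 1, one_pos, fun h => absurd h hp⟩
  choose ρ W φ K L hρ hprop using hpatch
  have hcover : M ⊆ ⋃ p ∈ M, Metric.ball p (ρ p) := fun p hp =>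
    Set.mem_biUnion hp (Metric.mem_ball_self (hρ p))
  obtain ⟨t, htM, htfin, htcover⟩ := hM.elim_finite_subcover_image
    (fun p _ => Metric.isOpen_ball) hcover
  set F := htfin.toFinset with hF
  have hFM : ∀ p ∈ F, p ∈ M := fun p hp => htM ((Set.Finite.mem_toFinset htfin).1 hp)
  set C := ∑ p ∈ F, ((L p : ℝ))^m * ((Real.sqrt m)^m * (2 * ((K p : ℝ) * 2))^m) with hC
  refine ⟨C, Finset.sum_nonneg (fun p _ => by positivity), ?_⟩
  intro x s hs
  have hsubc : M ∩ Metric.closedBall x s ⊆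
      ⋃ p ∈ F, (M ∩ Metric.ball p (ρ p) ∩ Metric.closedBall x s) := by
    rintro z ⟨hzM, hzB⟩
    obtain ⟨p, hpF, hpz⟩ := Set.mem_iUnion₂.1 (htcover hzM)
    exact Set.mem_iUnion₂.2 ⟨p, (Set.Finite.mem_toFinset htfin).2 hpF, ⟨⟨hzM, hpz⟩, hzB⟩⟩
  have hbu : μH[(m:ℝ)] (⋃ p ∈ F, (M ∩ Metric.ball p (ρ p) ∩ Metric.closedBall x s)) ≤
      ∑ p ∈ F, μH[(m:ℝ)] (M ∩ Metric.ball p (ρ p) ∩ Metric.closedBall x s) :=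
    MeasureTheory.measure_biUnion_finset_le (F := Measure (EuclideanSpace ℝ (Fin d))) (μ := μH[(m:ℝ)]) F _
  calc μH[(m:ℝ)] (M ∩ Metric.closedBall x s)
      ≤ ∑ p ∈ F, μH[(m:ℝ)] (M ∩ Metric.ball p (ρ p) ∩ Metric.closedBall x s) :=
        (measure_mono hsubc).trans hbu
    _ ≤ ∑ p ∈ F, ENNReal.ofReal ((((L p : ℝ))^m *
          ((Real.sqrt m)^m * (2 * ((K p : ℝ) * 2))^m)) * s ^ m) := by
        refine Finset.sum_le_sum (fun p hpF => ?_)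
        obtain ⟨hsub', hlip, hanti⟩ := hprop p (hFM p hpF)
        set A := W p ∩ (φ p) ⁻¹' (Metric.closedBall x s) with hA
        have himg : M ∩ Metric.ball p (ρ p) ∩ Metric.closedBall x s ⊆ φ p '' A := by
          rintro z ⟨hz1, hz2⟩
          obtain ⟨a, haW, haz⟩ := hsub' hz1
          exact ⟨a, ⟨haW, by rw [Set.mem_preimage, haz]; exact hz2⟩, haz⟩
        rcases Set.eq_empty_or_nonempty A with hAe | ⟨a₀, ha₀⟩
        · rw [hAe, Set.image_empty] at himg
          have h0 : μH[(m:ℝ)] (M ∩ Metric.ball p (ρ p) ∩ Metric.closedBall x s) ≤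
              μH[(m:ℝ)] (∅ : Set (EuclideanSpace ℝ (Fin d))) := measure_mono himg
          exact le_trans h0 (by simp)
        · have hAball : A ⊆ Metric.closedBall a₀ ((K p : ℝ) * (2 * s)) := by
            intro a ha
            have h1 : dist a a₀ ≤ (K p) * dist (φ p a) (φ p a₀) := hanti a ha.1 a₀ ha₀.1
            have h2 : dist (φ p a) (φ p a₀) ≤ 2 * s := by
              calc dist (φ p a) (φ p a₀) ≤ dist (φ p a) x + dist x (φ p a₀) :=
                dist_triangle _ _ _
              _ ≤ s + s := add_le_add (Metric.mem_closedBall.1 ha.2)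
                  (by rw [dist_comm]; exact Metric.mem_closedBall.1 ha₀.2)
              _ = 2 * s := by ring
            refine Metric.mem_closedBall.2 (h1.trans ?_)
            exact mul_le_mul_of_nonneg_left h2 (NNReal.coe_nonneg (K p))
          have hlipOn : LipschitzOnWith (L p) (φ p) (W p) :=
            lipschitzOnWith_iff_dist_le_mul.2 (fun a ha b hb => hlip a ha b hb)
          have hKt : (0:ℝ) ≤ (K p : ℝ) * (2 * s) := by positivity
          calc μH[(m:ℝ)] (M ∩ Metric.ball p (ρ p) ∩ Metric.closedBall x s)
              ≤ μH[(m:ℝ)] (φ p '' A) := measure_mono himg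
            _ ≤ ((L p : ℝ≥0∞)) ^ (m:ℝ) * μH[(m:ℝ)] A :=
                (hlipOn.mono Set.inter_subset_left).hausdorffMeasure_image_le (by positivity)
            _ ≤ ((L p : ℝ≥0∞)) ^ (m:ℝ) *
                ENNReal.ofReal ((Real.sqrt m)^m * (2 * ((K p : ℝ) * (2 * s)))^m) :=
                mul_le_mul_right ((measure_mono hAball).trans (hm_closedBall_le m a₀ hKt)) _
            _ = ENNReal.ofReal ((((L p : ℝ))^m *
                ((Real.sqrt m)^m * (2 * ((K p : ℝ) * 2))^m)) * s ^ m) := by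
                have hLpow : ((L p : ℝ≥0∞)) ^ (m:ℝ) = ENNReal.ofReal ((L p : ℝ) ^ m) := by
                  rw [ENNReal.rpow_natCast, ← ENNReal.coe_pow, ← ENNReal.ofReal_coe_nnreal]
                  push_cast
                  ring_nf
                rw [hLpow, ← ENNReal.ofReal_mul (by positivity)]
                congr 1
                ring
    _ = ENNReal.ofReal (C * s ^ m) := by
        rw [hC, Finset.sum_mul, ENNReal.ofReal_sum_of_nonneg (fun p _ => by positivity)]


end Subcrit

end AuxSubcrit

/-- Sub-critical regime: the expected number of connected components of `U(𝒳_n, r_n)`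
is asymptotically `n`. -/
theorem subcritical_expectation_beta0
    {d m : ℕ} (hm : 1 ≤ m) (hmd : m < d)
    (M : Set (EuclideanSpace ℝ (Fin d))) (hMcpt : IsCompact M)
    (hMsub : IsSmoothSubmanifold m M)
    (f : EuclideanSpace ℝ (Fin d) → ℝ) (hf0 : ∀ x, 0 ≤ f x)
    (hfmeas : Measurable f) (hfbdd : ∃ B, ∀ x, f x ≤ B)
    (hf1 : ∫ x in M, f x ∂(Measure.hausdorffMeasure (m : ℝ)) = 1)
    {Ω : Type} [MeasurableSpace Ω] (P : Measure Ω) [IsProbabilityMeasure P]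
    (X : ℕ → Ω → EuclideanSpace ℝ (Fin d))
    (hXmeas : ∀ i, Measurable (X i))
    (hXindep : ProbabilityTheory.iIndepFun X P)
    (hXlaw : ∀ i, Measure.map (X i) P = sampleMeasure m M f)
    (r : ℕ → ℝ) (hrpos : ∀ n, 0 < r n)
    (hr0 : Tendsto r atTop (𝓝 0))
    (hnr : Tendsto (fun n : ℕ => (n : ℝ) * r n ^ m) atTop (𝓝 0)) :
    Tendsto
      (fun n : ℕ => (∫ ω, (numComponents (unionBalls X n (r n) ω) : ℝ) ∂P) / (n : ℝ))
      atTop (𝓝 1) := by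
  classical
  obtain ⟨C, hC0, hC⟩ := Subcrit.ahlfors hMcpt hMsub
  obtain ⟨B, hB⟩ := hfbdd
  have hB0 : 0 ≤ B := le_trans (hf0 0) (hB 0)
  set μ := sampleMeasure m M f with hμ
  have hμuniv : μ Set.univ = 1 := by
    have h0 := hXlaw 0
    have h1 : (Measure.map (X 0) P) Set.univ = 1 := by
      rw [Measure.map_apply (hXmeas 0) MeasurableSet.univ]
      simp
    rwa [h0] at h1
  haveI hμprob : IsProbabilityMeasure μ := ⟨hμuniv⟩
  have hμball : ∀ (x : EuclideanSpace ℝ (Fin d)) (s : ℝ), 0 < s →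
      μ (Metric.closedBall x s) ≤ ENNReal.ofReal (B * (C * s ^ m)) := by
    intro x s hs
    rw [hμ, sampleMeasure, withDensity_apply _ measurableSet_closedBall]
    calc ∫⁻ a in Metric.closedBall x s, ENNReal.ofReal (f a)
          ∂((Measure.hausdorffMeasure (m:ℝ)).restrict M)
        ≤ ∫⁻ _a in Metric.closedBall x s, ENNReal.ofReal B
          ∂((Measure.hausdorffMeasure (m:ℝ)).restrict M) :=
          lintegral_mono (fun a => ENNReal.ofReal_le_ofReal (hB a))
      _ = ENNReal.ofReal B *
            ((Measure.hausdorffMeasure (m:ℝ)).restrict M) (Metric.closedBall x s) := by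
          rw [MeasureTheory.setLIntegral_const]
      _ ≤ ENNReal.ofReal B * ENNReal.ofReal (C * s ^ m) := by
          rw [Measure.restrict_apply measurableSet_closedBall, Set.inter_comm]
          exact mul_le_mul_right (hC x s hs) _
      _ = ENNReal.ofReal (B * (C * s ^ m)) := (ENNReal.ofReal_mul hB0).symm
  have hpairP : ∀ i j : ℕ, i ≠ j → ∀ s : ℝ, 0 < s →
      P {ω | dist (X i ω) (X j ω) ≤ s} ≤ ENNReal.ofReal (B * (C * s ^ m)) := by
    intro i j hij s hs
    have hD : MeasurableSet {q : EuclideanSpace ℝ (Fin d) × EuclideanSpace ℝ (Fin d) |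
        dist q.1 q.2 ≤ s} :=
      (isClosed_le (continuous_fst.dist continuous_snd) continuous_const).measurableSet
    have hmap : Measure.map (fun ω => (X i ω, X j ω)) P = μ.prod μ := by
      have h := (ProbabilityTheory.indepFun_iff_map_prod_eq_prod_map_map
        (hXmeas i).aemeasurable (hXmeas j).aemeasurable).1 (hXindep.indepFun hij)
      rw [h, hXlaw i, hXlaw j]
    have hev : {ω | dist (X i ω) (X j ω) ≤ s} =
        (fun ω => (X i ω, X j ω)) ⁻¹' {q | dist q.1 q.2 ≤ s} := rfl
    rw [hev, ← Measure.map_apply ((hXmeas i).prodMk (hXmeas j)) hD, hmap,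
      Measure.prod_apply hD]
    have hsec : ∀ x : EuclideanSpace ℝ (Fin d),
        (Prod.mk x ⁻¹' {q : EuclideanSpace ℝ (Fin d) × EuclideanSpace ℝ (Fin d) |
          dist q.1 q.2 ≤ s}) = Metric.closedBall x s := by
      intro x; ext y
      simp only [Set.mem_preimage, Set.mem_setOf_eq, Metric.mem_closedBall]
      rw [dist_comm]
    calc ∫⁻ x, μ (Prod.mk x ⁻¹' {q | dist q.1 q.2 ≤ s}) ∂μ
        ≤ ∫⁻ _x, ENNReal.ofReal (B * (C * s ^ m)) ∂μ :=
          lintegral_mono (fun x => by rw [hsec x]; exact hμball x s hs)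
      _ = ENNReal.ofReal (B * (C * s ^ m)) := by
          rw [lintegral_const, hμuniv, mul_one]
  -- the per-n estimates
  have hkey : ∀ n : ℕ, 1 ≤ n →
      1 - (n:ℝ) * (B * (C * (2 * r n) ^ m)) ≤
        (∫ ω, (numComponents (unionBalls X n (r n) ω) : ℝ) ∂P) / (n : ℝ) ∧
      (∫ ω, (numComponents (unionBalls X n (r n) ω) : ℝ) ∂P) / (n : ℝ) ≤ 1 := by
    intro n hn
    have hnpos : (0:ℝ) < n := by exact_mod_cast hn
    set Afun : Ω → Fin n → Fin n → Bool :=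
      fun ω i j => decide (dist (X i ω) (X j ω) ≤ 2 * r n) with hAfun
    have hUeq : ∀ ω, unionBalls X n (r n) ω =
        ⋃ i : Fin n, Metric.closedBall (X i ω) (r n) := by
      intro ω; ext z
      simp only [unionBalls, Set.mem_iUnion, Finset.mem_range, exists_prop]
      constructor
      · rintro ⟨i, hi, h⟩; exact ⟨⟨i, hi⟩, h⟩
      · rintro ⟨i, h⟩; exact ⟨i.1, i.2, h⟩
    have hβeq : ∀ ω, numComponents (unionBalls X n (r n) ω) = Subcrit.ncomp n (Afun ω) := by
      intro ω
      rw [hUeq ω]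
      exact Subcrit.numComponents_eq_ncomp (fun i : Fin n => X i ω) (hrpos n) (Afun ω)
        (fun i j => by simp [hAfun])
    have hAsymm : ∀ ω (i j : Fin n), Afun ω i j = Afun ω j i := by
      intro ω i j; simp [hAfun, dist_comm]
    have hAmeas : Measurable Afun := by
      apply measurable_pi_lambda
      intro i
      apply measurable_pi_lambda
      intro j
      have hset : MeasurableSet {ω | dist (X i ω) (X j ω) ≤ 2 * r n} :=
        measurableSet_le ((hXmeas i).dist (hXmeas j)) measurable_const
      have hite : (fun ω => Afun ω i j) =
          fun ω => if dist (X i ω) (X j ω) ≤ 2 * r n then true else false := by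
        funext ω
        by_cases h : dist (X i ω) (X j ω) ≤ 2 * r n <;> simp [hAfun, h]
      rw [hite]
      exact Measurable.ite hset measurable_const measurable_const
    have hβmeas : Measurable (fun ω => (numComponents (unionBalls X n (r n) ω) : ℝ)) := by
      have h1 : Measurable (fun Bm : Fin n → Fin n → Bool => ((Subcrit.ncomp n Bm : ℕ) : ℝ)) :=
        measurable_of_finite _
      have h2 := h1.comp hAmeas
      have heq : (fun ω => (numComponents (unionBalls X n (r n) ω) : ℝ)) =
          fun ω => ((Subcrit.ncomp n (Afun ω) : ℕ) : ℝ) := by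
        funext ω; rw [hβeq ω]
      rw [heq]
      exact h2
    have hβbdd : ∀ ω, (numComponents (unionBalls X n (r n) ω) : ℝ) ≤ n := by
      intro ω
      have : numComponents (unionBalls X n (r n) ω) ≤ n := by
        rw [hβeq ω]; exact Subcrit.ncomp_le n _
      exact_mod_cast this
    have hβint : Integrable (fun ω => (numComponents (unionBalls X n (r n) ω) : ℝ)) P := by
      refine (integrable_const (n:ℝ)).mono' hβmeas.aestronglyMeasurable ?_
      refine Filter.Eventually.of_forall (fun ω => ?_)
      rw [Real.norm_eq_abs, abs_of_nonneg (Nat.cast_nonneg _)]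
      exact hβbdd ω
    -- the pair-counting function
    set g : Ω → ℝ := fun ω => ∑ i : Fin n, ∑ j : Fin n,
      Set.indicator {ω' : Ω | j ≠ i ∧ dist (X i ω') (X j ω') ≤ 2 * r n} (fun _ => (1:ℝ)) ω
      with hg
    have hSetm : ∀ i j : Fin n,
        MeasurableSet {ω : Ω | j ≠ i ∧ dist (X i ω) (X j ω) ≤ 2 * r n} := by
      intro i j
      have : {ω : Ω | j ≠ i ∧ dist (X i ω) (X j ω) ≤ 2 * r n} =
          {ω : Ω | j ≠ i} ∩ {ω : Ω | dist (X i ω) (X j ω) ≤ 2 * r n} := by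
        ext ω; simp [Set.mem_setOf_eq, Set.mem_inter_iff]
      rw [this]
      exact (MeasurableSet.const _).inter
        (measurableSet_le ((hXmeas i).dist (hXmeas j)) measurable_const)
    have hterm_int : ∀ i j : Fin n, Integrable
        (Set.indicator {ω' : Ω | j ≠ i ∧ dist (X i ω') (X j ω') ≤ 2 * r n}
          (fun _ => (1:ℝ))) P :=
      fun i j => (integrable_const (1:ℝ)).indicator (hSetm i j)
    have hg_int : Integrable g P := by
      rw [hg]
      exact integrable_finset_sum _ (fun i _ =>
        integrable_finset_sum _ (fun j _ => hterm_int i j))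
    set b1 : ℝ := B * (C * (2 * r n) ^ m) with hb1def
    have hb1 : 0 ≤ b1 :=
      mul_nonneg hB0 (mul_nonneg hC0 (pow_nonneg (by linarith [hrpos n]) m))
    have hgE : ∫ ω, g ω ∂P ≤ (n:ℝ) * ((n:ℝ) * b1) := by
      have h1 : ∫ ω, g ω ∂P = ∑ i : Fin n, ∑ j : Fin n,
          (P {ω : Ω | j ≠ i ∧ dist (X i ω) (X j ω) ≤ 2 * r n}).toReal := by
        rw [hg, integral_finset_sum _ (fun i _ =>
          integrable_finset_sum _ (fun j _ => hterm_int i j))]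
        refine Finset.sum_congr rfl (fun i _ => ?_)
        rw [integral_finset_sum _ (fun j _ => hterm_int i j)]
        refine Finset.sum_congr rfl (fun j _ => ?_)
        rw [integral_indicator_const (1:ℝ) (hSetm i j), smul_eq_mul, mul_one]; rfl
      rw [h1]
      have hterm_le : ∀ i j : Fin n,
          (P {ω : Ω | j ≠ i ∧ dist (X i ω) (X j ω) ≤ 2 * r n}).toReal ≤ b1 := by
        intro i j
        by_cases hij : j = i
        · simp [hij, hb1]
        · have hsub : {ω : Ω | j ≠ i ∧ dist (X i ω) (X j ω) ≤ 2 * r n} ⊆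
              {ω : Ω | dist (X (i:ℕ) ω) (X (j:ℕ) ω) ≤ 2 * r n} := fun ω h => h.2
          have hijn : (i : ℕ) ≠ (j : ℕ) := by
            intro h
            exact hij (Fin.ext h.symm)
          have := (measure_mono hsub).trans
            (hpairP i j hijn (2 * r n) (by linarith [hrpos n]))
          exact ENNReal.toReal_le_of_le_ofReal hb1 this
      calc (∑ i : Fin n, ∑ j : Fin n,
            (P {ω : Ω | j ≠ i ∧ dist (X i ω) (X j ω) ≤ 2 * r n}).toReal)
          ≤ ∑ _i : Fin n, ∑ _j : Fin n, b1 :=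
            Finset.sum_le_sum (fun i _ => Finset.sum_le_sum (fun j _ => hterm_le i j))
        _ = (n:ℝ) * ((n:ℝ) * b1) := by
            simp [Finset.sum_const, Finset.card_univ, mul_assoc]
    have hlow : ∀ ω, (n:ℝ) ≤ (numComponents (unionBalls X n (r n) ω) : ℝ) + g ω := by
      intro ω
      have hnat := Subcrit.le_ncomp_add n (Afun ω) (hAsymm ω)
      have hgω : g ω = ((∑ i : Fin n, ∑ j : Fin n,
          (if j ≠ i ∧ Afun ω i j = true then 1 else 0) : ℕ) : ℝ) := by
        rw [hg]
        push_cast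
        refine Finset.sum_congr rfl (fun i _ => ?_)
        refine Finset.sum_congr rfl (fun j _ => ?_)
        rw [Set.indicator_apply]
        by_cases h : j ≠ i ∧ dist (X i ω) (X j ω) ≤ 2 * r n
        · simp [h, hAfun, Set.mem_setOf_eq]
        · have h' : ¬ (j ≠ i ∧ Afun ω i j = true) := by
            simp only [hAfun, decide_eq_true_eq]
            exact h
          simp [Set.mem_setOf_eq, h, h']
      rw [hgω, hβeq ω]
      exact_mod_cast hnat
    have hupE : ∫ ω, (numComponents (unionBalls X n (r n) ω) : ℝ) ∂P ≤ n := by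
      have := integral_mono hβint (integrable_const (n:ℝ)) (fun ω => hβbdd ω)
      simpa using this
    have hlowE : (n:ℝ) - (n:ℝ) * ((n:ℝ) * b1) ≤
        ∫ ω, (numComponents (unionBalls X n (r n) ω) : ℝ) ∂P := by
      have h1 : (n:ℝ) ≤ ∫ ω, ((numComponents (unionBalls X n (r n) ω) : ℝ) + g ω) ∂P := by
        have := integral_mono (integrable_const (n:ℝ)) (hβint.add hg_int) (fun ω => hlow ω)
        simpa using this
      rw [integral_add hβint hg_int] at h1
      linarith [hgE]
    constructor
    · rw [le_div_iff₀ hnpos]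
      have : (1 - (n:ℝ) * b1) * n = (n:ℝ) - (n:ℝ) * ((n:ℝ) * b1) := by ring
      rw [hb1def] at this ⊢
      rw [this]
      exact hlowE
    · rw [div_le_one hnpos]
      exact hupE
  -- squeeze
  have hlowT : Tendsto (fun n : ℕ => 1 - (n:ℝ) * (B * (C * (2 * r n) ^ m))) atTop (𝓝 1) := by
    have heq : (fun n : ℕ => (n:ℝ) * (B * (C * (2 * r n) ^ m))) =
        fun n : ℕ => ((n:ℝ) * (r n) ^ m) * (B * C * 2 ^ m) := by
      funext n
      rw [mul_pow]
      ring
    have h0 : Tendsto (fun n : ℕ => (n:ℝ) * (B * (C * (2 * r n) ^ m))) atTop (𝓝 0) := by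
      rw [heq]
      simpa using hnr.mul_const (B * C * 2 ^ m)
    have hconst : Tendsto (fun _ : ℕ => (1:ℝ)) atTop (𝓝 1) := tendsto_const_nhds
    have := hconst.sub h0
    simpa using this
  refine tendsto_of_tendsto_of_tendsto_of_le_of_le' hlowT tendsto_const_nhds ?_ ?_
  · filter_upwards [Filter.eventually_ge_atTop 1] with n hn
    exact (hkey n hn).1
  · filter_upwards [Filter.eventually_ge_atTop 1] with n hn
    exact (hkey n hn).2


end
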